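/- Let d ≥ 3 be an integer and let 0 < α < π. Then ∫_α^π (1 − cos η)^{−(d−2)/2} · ((1 − cos α)/(1 − cos η))^{(d−1)/2} · ((1 − cos α)/(cos α − cos η))^{1/2} · ₂F₁(1, (d−1)/2; 1/2; (cos α − cos η)/(1 − cos η)) · sin^{d−2}(η) dη = (√π · 2^{(d−2)/2} · Γ((d−1)/2) / Γ((d−2)/2)) · B(cos²(α/2); (d−2)/2, 1/2). -/

import Mathlib

open Real MeasureTheory

/-- The Pochhammer symbol `(a)_n = a(a+1)⋯(a+n−1)`, with `(a)_0 = 1`. -/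
noncomputable def poch (a : ℝ) (n : ℕ) : ℝ := ∏ i ∈ Finset.range n, (a + i)

/-- The Gauss hypergeometric function `₂F₁(a,b;c;z) = Σₙ ((a)ₙ(b)ₙ/(c)ₙ) zⁿ/n!`. -/
noncomputable def hyp2F1 (a b c z : ℝ) : ℝ :=
  ∑' n : ℕ, poch a n * poch b n / poch c n * z ^ n / (n.factorial : ℝ)

/-- The incomplete Beta function `B(z; a, b) = ∫₀^z t^{a−1}(1−t)^{b−1} dt`. -/
noncomputable def incBeta (z a b : ℝ) : ℝ := ∫ t in (0:ℝ)..z, t ^ (a - 1) * (1 - t) ^ (b - 1)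

/-! The substitution `x = (cos α - cos η) / (1 - cos η)` maps `(α, π)` onto `(0, m)` with
`m = cos² (α / 2)` and turns the integrand into a constant times
`x^(-1/2) (m - x)^(a - 1/2) ₂F₁(1, a + 1/2; 1/2; x)`, where `a = (d - 2) / 2`. Integrating the
series termwise against this Beta kernel gives `B(1/2, a + 1/2) m^a ₂F₁(1, a + 1/2; a + 1; m)`.
On the other side `B(m; a, b) = m^a (1 - m)^b / a · ₂F₁(1, a + b; a + 1; m)`: the derivative
of the right-hand side is the Beta integrand because `₂F₁(1, a + b; a + 1; ·)` satisfies a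
first-order linear ODE. -/

open Set

lemma poch_zero (a : ℝ) : poch a 0 = 1 := by simp [poch]

lemma poch_succ (a : ℝ) (n : ℕ) : poch a (n + 1) = poch a n * (a + n) :=
  Finset.prod_range_succ _ n

lemma poch_pos {a : ℝ} (ha : 0 < a) (n : ℕ) : 0 < poch a n :=
  Finset.prod_pos fun i _ => by positivity

lemma poch_le_poch {a b : ℝ} (ha : 0 < a) (hab : a ≤ b) (n : ℕ) : poch a n ≤ poch b n :=
  Finset.prod_le_prod (fun i _ => by positivity) fun i _ => by linarith

lemma poch_one (n : ℕ) : poch 1 n = n.factorial := by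
  induction n with
  | zero => simp [poch_zero]
  | succ n ih => rw [poch_succ, ih, Nat.factorial_succ]; push_cast; ring

lemma Real.Gamma_add_nat_eq_poch_mul {a : ℝ} (ha : 0 < a) (n : ℕ) :
    Gamma (a + n) = poch a n * Gamma a := by
  induction n with
  | zero => simp [poch_zero]
  | succ n ih =>
    rw [Nat.cast_succ, ← add_assoc, Gamma_add_one (by positivity), ih, poch_succ]; ring

lemma poch_div_poch_pos {b c : ℝ} (hb : 0 < b) (hc : 0 < c) (n : ℕ) :
    0 < poch b n / poch c n :=
  div_pos (poch_pos hb n) (poch_pos hc n)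

lemma hyp2F1_one_left (b c z : ℝ) : hyp2F1 1 b c z = ∑' n, poch b n / poch c n * z ^ n := by
  refine tsum_congr fun n => ?_
  have : (n.factorial : ℝ) ≠ 0 := by positivity
  rw [poch_one]
  field_simp

section BoundedCoefficients

variable {g : ℕ → ℝ}

lemma summable_mul_pow_of_abs_le_one (hg : ∀ n, |g n| ≤ 1) {y : ℝ} (hy : |y| < 1) :
    Summable fun n => g n * y ^ n := by
  refine (summable_geometric_of_lt_one (abs_nonneg y) hy).of_norm_bounded fun n => ?_
  rw [Real.norm_eq_abs, abs_mul, abs_pow]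
  exact mul_le_of_le_one_left (by positivity) (hg n)

lemma summable_nat_mul_pow_pred {r : ℝ} (hr0 : 0 ≤ r) (hr : r < 1) :
    Summable fun n : ℕ => (n : ℝ) * r ^ (n - 1) := by
  have h : Summable fun n : ℕ => ((n : ℝ) + 1) * r ^ n := by
    have := summable_pow_mul_geometric_of_norm_lt_one 1
      (by rwa [Real.norm_eq_abs, abs_of_nonneg hr0])
    simpa [add_mul] using this.add (summable_geometric_of_lt_one hr0 hr)
  refine (summable_nat_add_iff 1).1 (h.congr fun n => ?_)
  simp

lemma summable_mul_nat_mul_pow_pred_of_abs_le_one (hg : ∀ n, |g n| ≤ 1) {y : ℝ}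
    (hy : |y| < 1) : Summable fun n => g n * ((n : ℝ) * y ^ (n - 1)) := by
  refine (summable_nat_mul_pow_pred (abs_nonneg y) hy).of_norm_bounded fun n => ?_
  rw [Real.norm_eq_abs, abs_mul, abs_mul, Nat.abs_cast, abs_pow]
  exact mul_le_of_le_one_left (by positivity) (hg n)

lemma hasDerivAt_tsum_mul_pow_of_abs_le_one (hg : ∀ n, |g n| ≤ 1) {y : ℝ} (hy : |y| < 1) :
    HasDerivAt (fun z => ∑' n, g n * z ^ n) (∑' n, g n * ((n : ℝ) * y ^ (n - 1))) y := by
  set r := (1 + |y|) / 2 with hr_def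
  have hr : r < 1 := by linarith
  have hyr : y ∈ Ioo (-r) r := abs_lt.1 (by linarith)
  refine hasDerivAt_tsum_of_isPreconnected (summable_nat_mul_pow_pred (by positivity) hr)
    isOpen_Ioo isPreconnected_Ioo (fun n z _ => (hasDerivAt_pow n z).const_mul (g n))
    (fun n z hz => ?_) (y₀ := 0) ⟨by linarith [abs_nonneg y], by positivity⟩
    (summable_mul_pow_of_abs_le_one hg (by simp)) hyr
  rw [Real.norm_eq_abs, abs_mul, abs_mul, Nat.abs_cast, abs_pow]
  refine (mul_le_of_le_one_left (by positivity) (hg n)).trans ?_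
  gcongr
  exact abs_le.2 ⟨hz.1.le, hz.2.le⟩

end BoundedCoefficients

lemma abs_poch_div_poch_le_one {b c : ℝ} (hb : 0 < b) (hbc : b ≤ c) (n : ℕ) :
    |poch b n / poch c n| ≤ 1 := by
  rw [abs_of_pos (poch_div_poch_pos hb (hb.trans_le hbc) n)]
  exact div_le_one_of_le₀ (poch_le_poch hb hbc n) (poch_pos (hb.trans_le hbc) n).le

lemma hasDerivAt_hyp2F1_one_left {b c y : ℝ} (hb : 0 < b) (hbc : b ≤ c) (hy : |y| < 1) :
    HasDerivAt (hyp2F1 1 b c) (∑' n, poch b n / poch c n * ((n : ℝ) * y ^ (n - 1))) y := by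
  rw [show hyp2F1 1 b c = _ from funext (hyp2F1_one_left b c)]
  exact hasDerivAt_tsum_mul_pow_of_abs_le_one (abs_poch_div_poch_le_one hb hbc) hy

/-- Termwise the left-hand side telescopes: `gₙ = (a + b)ₙ / (a + 1)ₙ` satisfies
`(a + b + n) gₙ = (a + 1 + n) gₙ₊₁`. -/
lemma hyp2F1_incBeta_ode {a b y : ℝ} (ha : 0 < a) (hab : 0 < a + b) (hb : b ≤ 1)
    (hy : |y| < 1) :
    y * (1 - y) * (∑' n, poch (a + b) n / poch (a + 1) n * ((n : ℝ) * y ^ (n - 1)))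
      + (a - (a + b) * y) * hyp2F1 1 (a + b) (a + 1) y = a := by
  set g : ℕ → ℝ := fun n => poch (a + b) n / poch (a + 1) n with hg_def
  have hg : ∀ n, |g n| ≤ 1 := abs_poch_div_poch_le_one hab (by linarith)
  have hrec : ∀ n : ℕ, g (n + 1) * (a + 1 + n) = g n * (a + b + n) := fun n => by
    have := (poch_pos (by linarith : (0:ℝ) < a + 1) n).ne'
    simp only [hg_def, poch_succ]
    field_simp
  have hy_pow : ∀ n : ℕ, y * ((n : ℝ) * y ^ (n - 1)) = n * y ^ n := by
    rintro (_ | n) <;> simp [pow_succ]; ring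
  set S : ℕ → ℝ := fun n => ((n : ℝ) + a) * g n * y ^ n with hS_def
  have hS : Summable S := by
    have hgeom : Summable fun n : ℕ => ((n : ℝ) + a) * |y| ^ n := by
      have := summable_pow_mul_geometric_of_norm_lt_one 1 (by rwa [Real.norm_eq_abs, abs_abs])
      simpa [add_mul] using this.add ((summable_geometric_of_lt_one (abs_nonneg y) hy).mul_left a)
    refine hgeom.of_norm_bounded fun n => ?_
    rw [Real.norm_eq_abs, abs_mul, abs_mul, abs_of_nonneg (by positivity : (0:ℝ) ≤ n + a),
      abs_pow, mul_assoc]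
    exact mul_le_mul_of_nonneg_left (mul_le_of_le_one_left (by positivity) (hg n)) (by positivity)
  have hterm : ∀ n, y * (1 - y) * (g n * ((n : ℝ) * y ^ (n - 1)))
      + (a - (a + b) * y) * (g n * y ^ n) = S n - S (n + 1) := fun n => by
    simp only [hS_def]
    push_cast
    linear_combination (1 - y) * g n * hy_pow n + y ^ (n + 1) * hrec n
  rw [hyp2F1_one_left, ← tsum_mul_left, ← tsum_mul_left,
    ← ((summable_mul_nat_mul_pow_pred_of_abs_le_one hg hy).mul_left _).tsum_add
      ((summable_mul_pow_of_abs_le_one hg hy).mul_left _)]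
  simp only [hterm]
  rw [(hS.tsum_sub ((summable_nat_add_iff 1).2 hS)), hS.tsum_eq_zero_add]
  simp [hS_def, hg_def, poch_zero]

lemma hasDerivAt_incBeta_primitive {a b y : ℝ} (ha : 0 < a) (hab : 0 < a + b) (hb : b ≤ 1)
    (hy0 : 0 < y) (hy1 : y < 1) :
    HasDerivAt (fun t => t ^ a * (1 - t) ^ b / a * hyp2F1 1 (a + b) (a + 1) t)
      (y ^ (a - 1) * (1 - y) ^ (b - 1)) y := by
  have hy : |y| < 1 := by rwa [abs_of_pos hy0]
  have h1y : 0 < 1 - y := by linarith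
  have hpow : HasDerivAt (fun t => t ^ a) (a * y ^ (a - 1)) y :=
    Real.hasDerivAt_rpow_const (Or.inl hy0.ne')
  have hpow' : HasDerivAt (fun t => (1 - t) ^ b) (-1 * b * (1 - y) ^ (b - 1)) y :=
    ((hasDerivAt_id y).const_sub 1).rpow_const (Or.inl h1y.ne')
  refine (((hpow.mul hpow').div_const a).mul
    (hasDerivAt_hyp2F1_one_left hab (by linarith) hy)).congr_deriv ?_
  have hya : y ^ a = y ^ (a - 1) * y := by rw [← Real.rpow_add_one hy0.ne']; ring_nf
  have hyb : (1 - y) ^ b = (1 - y) ^ (b - 1) * (1 - y) := by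
    rw [← Real.rpow_add_one h1y.ne']; ring_nf
  simp only [Pi.mul_apply]
  rw [hya, hyb]
  have hode := hyp2F1_incBeta_ode ha hab hb hy
  generalize hyp2F1 1 (a + b) (a + 1) y = F at hode ⊢
  generalize (∑' n, poch (a + b) n / poch (a + 1) n * ((n : ℝ) * y ^ (n - 1))) = F' at hode ⊢
  field_simp
  linear_combination hode

theorem incBeta_eq_mul_hyp2F1 {a b x : ℝ} (ha : 0 < a) (hab : 0 < a + b) (hb : b ≤ 1)
    (hx0 : 0 ≤ x) (hx1 : x < 1) :
    incBeta x a b = x ^ a * (1 - x) ^ b / a * hyp2F1 1 (a + b) (a + 1) x := by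
  have hcont : ContinuousOn (fun t => t ^ a * (1 - t) ^ b / a * hyp2F1 1 (a + b) (a + 1) t)
      (Icc 0 x) := fun t ht => by
    have h1t : 1 - t ≠ 0 := by linarith [ht.2]
    have ht1 : |t| < 1 := by rw [abs_of_nonneg ht.1]; linarith [ht.2]
    exact ((((Real.continuousAt_rpow_const t a (Or.inr ha.le)).mul
      ((continuousAt_const.sub continuousAt_id).rpow_const (Or.inl h1t))).div_const a).mul
      (hasDerivAt_hyp2F1_one_left hab (by linarith) ht1).continuousAt).continuousWithinAt
  have hint : IntervalIntegrable (fun t => t ^ (a - 1) * (1 - t) ^ (b - 1)) volume 0 x := by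
    refine (intervalIntegral.intervalIntegrable_rpow' (by linarith)).mul_continuousOn
      fun t ht => ?_
    rw [uIcc_of_le hx0] at ht
    exact ((continuousAt_const.sub continuousAt_id).rpow_const
      (Or.inl (by simp; linarith [ht.2]))).continuousWithinAt
  rw [incBeta, intervalIntegral.integral_eq_sub_of_hasDerivAt_of_le hx0 hcont
    (fun y hy => hasDerivAt_incBeta_primitive ha hab hb hy.1 (hy.2.trans hx1)) hint]
  simp [Real.zero_rpow ha.ne']

lemma integral_Ioo_rpow_mul_sub_rpow {p q m : ℝ} (hm : 0 < m) (hp : 0 < p) (hq : 0 < q) :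
    ∫ x in Ioo 0 m, x ^ (p - 1) * (m - x) ^ (q - 1)
      = m ^ (p + q - 1) * (Gamma p * Gamma q / Gamma (p + q)) := by
  have hC := Complex.betaIntegral_scaled p q hm
  rw [Complex.betaIntegral_eq_Gamma_mul_div _ _ (by simpa) (by simpa)] at hC
  have hcast : ∫ x in (0:ℝ)..m, (x : ℂ) ^ ((p : ℂ) - 1) * ((m : ℂ) - x) ^ ((q : ℂ) - 1)
      = ((∫ x in (0:ℝ)..m, x ^ (p - 1) * (m - x) ^ (q - 1) : ℝ) : ℂ) := by
    rw [← intervalIntegral.integral_ofReal]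
    refine intervalIntegral.integral_congr fun x hx => ?_
    rw [uIcc_of_le hm.le] at hx
    push_cast
    rw [Complex.ofReal_cpow hx.1, Complex.ofReal_cpow (sub_nonneg.2 hx.2)]
    push_cast
    ring_nf
  rw [← integral_Ioc_eq_integral_Ioo, ← intervalIntegral.integral_of_le hm.le]
  apply Complex.ofReal_injective
  rw [← hcast, hC, ← Complex.ofReal_add, Complex.Gamma_ofReal, Complex.Gamma_ofReal,
    Complex.Gamma_ofReal, Complex.ofReal_mul, Complex.ofReal_cpow hm.le]
  push_cast
  rfl

lemma integrableOn_Ioo_rpow_mul_sub_rpow {p q m : ℝ} (hm : 0 < m) (hp : 0 < p) (hq : 0 < q) :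
    IntegrableOn (fun x => x ^ (p - 1) * (m - x) ^ (q - 1)) (Ioo 0 m) := by
  refine Integrable.of_integral_ne_zero ?_
  rw [integral_Ioo_rpow_mul_sub_rpow hm hp hq]
  have := Gamma_pos_of_pos hp
  have := Gamma_pos_of_pos hq
  have := Gamma_pos_of_pos (add_pos hp hq)
  positivity

theorem integral_Ioo_rpow_mul_sub_rpow_mul_hyp2F1 {b c β m : ℝ} (hb : 0 < b) (hc : 0 < c)
    (hβ : 0 < β) (hbcβ : b ≤ c + β) (hm0 : 0 < m) (hm1 : m < 1) :
    ∫ x in Ioo 0 m, x ^ (c - 1) * (m - x) ^ (β - 1) * hyp2F1 1 b c x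
      = Gamma c * Gamma β / Gamma (c + β) * m ^ (c + β - 1) * hyp2F1 1 b (c + β) m := by
  set w : ℕ → ℝ → ℝ := fun n x =>
    poch b n / poch c n * (x ^ (c + n - 1) * (m - x) ^ (β - 1)) with hw
  have hexpand : ∀ x ∈ Ioo 0 m,
      x ^ (c - 1) * (m - x) ^ (β - 1) * hyp2F1 1 b c x = ∑' n, w n x := fun x hx => by
    rw [hyp2F1_one_left, ← tsum_mul_left]
    refine tsum_congr fun n => ?_
    simp only [hw]
    rw [show c + n - 1 = (c - 1) + n by ring, Real.rpow_add hx.1, Real.rpow_natCast]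
    ring
  have hterm : ∀ n, ∫ x in Ioo 0 m, w n x
      = Gamma c * Gamma β / Gamma (c + β) * m ^ (c + β - 1)
        * (poch b n / poch (c + β) n * m ^ n) := fun n => by
    have := (poch_pos hc n).ne'
    have := (poch_pos (add_pos hc hβ) n).ne'
    have := (Gamma_pos_of_pos (add_pos hc hβ)).ne'
    simp only [hw]
    rw [integral_const_mul, integral_Ioo_rpow_mul_sub_rpow hm0 (by positivity) hβ,
      Real.Gamma_add_nat_eq_poch_mul hc, show c + n + β = (c + β) + n by ring,
      Real.Gamma_add_nat_eq_poch_mul (add_pos hc hβ),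
      show c + β + n - 1 = (c + β - 1) + n by ring, Real.rpow_add hm0, Real.rpow_natCast]
    field_simp
  have hnonneg : ∀ n, ∀ x ∈ Ioo 0 m, 0 ≤ w n x := fun n x hx => by
    have := poch_div_poch_pos hb hc n
    have := Real.rpow_nonneg hx.1.le (c + n - 1)
    have := Real.rpow_nonneg (sub_pos.2 hx.2).le (β - 1)
    positivity
  have hint : ∀ n, IntegrableOn (w n) (Ioo 0 m) := fun n =>
    (integrableOn_Ioo_rpow_mul_sub_rpow hm0 (by positivity) hβ).const_mul _
  have hsum : Summable fun n => ∫ x in Ioo 0 m, ‖w n x‖ := by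
    have hnorm : ∀ n, ∫ x in Ioo 0 m, ‖w n x‖ = ∫ x in Ioo 0 m, w n x := fun n =>
      setIntegral_congr_fun measurableSet_Ioo fun x hx => Real.norm_of_nonneg (hnonneg n x hx)
    simp only [hnorm, hterm]
    exact (summable_mul_pow_of_abs_le_one (abs_poch_div_poch_le_one hb hbcβ)
      (by rwa [abs_of_pos hm0])).mul_left _
  rw [setIntegral_congr_fun measurableSet_Ioo hexpand,
    ← integral_tsum_of_summable_integral_norm hint hsum, tsum_congr hterm, tsum_mul_left,
    hyp2F1_one_left]

lemma cos_mem_Ioo {x : ℝ} (h0 : 0 < x) (h1 : x < π) : cos x ∈ Ioo (-1) 1 :=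
  ⟨by simpa using cos_lt_cos_of_nonneg_of_le_pi h0.le le_rfl h1,
    by simpa using cos_lt_cos_of_nonneg_of_le_pi le_rfl h1.le h0⟩

lemma cos_half_sq (x : ℝ) : cos (x / 2) ^ 2 = (1 + cos x) / 2 := by
  rw [cos_sq, mul_div_cancel₀ x two_ne_zero]
  ring

section CosRatio

variable {α : ℝ}

lemma cos_ratio_strictMonoOn (h0 : 0 < α) :
    StrictMonoOn (fun η => (cos α - cos η) / (1 - cos η)) (Icc α π) := by
  intro x hx y hy hxy
  have hαx : cos x ≤ cos α := cos_le_cos_of_nonneg_of_le_pi h0.le hx.2 hx.1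
  have hα1 := (cos_mem_Ioo h0 (hx.1.trans_lt (hxy.trans_le hy.2))).2
  have hyx : cos y < cos x :=
    strictAntiOn_cos ⟨h0.le.trans hx.1, hx.2⟩ ⟨h0.le.trans hy.1, hy.2⟩ hxy
  simp only
  rw [div_lt_div_iff₀ (by linarith) (by linarith)]
  nlinarith

lemma hasDerivAt_cos_ratio {η : ℝ} (hη : cos η ≠ 1) :
    HasDerivAt (fun η => (cos α - cos η) / (1 - cos η))
      ((1 - cos α) * sin η / (1 - cos η) ^ 2) η := by
  have h1 : 1 - cos η ≠ 0 := sub_ne_zero.2 (Ne.symm hη)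
  refine (((hasDerivAt_cos η).const_sub (cos α)).div
    ((hasDerivAt_cos η).const_sub 1) h1).congr_deriv ?_
  ring

theorem integral_Ioo_comp_cos_ratio (h0 : 0 < α) (h1 : α < π) (g : ℝ → ℝ) :
    ∫ η in Ioo α π,
        (1 - cos α) * sin η / (1 - cos η) ^ 2 * g ((cos α - cos η) / (1 - cos η))
      = ∫ x in Ioo 0 (cos (α / 2) ^ 2), g x := by
  have hcos : ∀ η ∈ Icc α π, cos η < 1 := fun η hη =>
    (cos_le_cos_of_nonneg_of_le_pi h0.le hη.2 hη.1).trans_lt (cos_mem_Ioo h0 h1).2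
  have hmono := cos_ratio_strictMonoOn h0
  have hcont : ContinuousOn (fun η => (cos α - cos η) / (1 - cos η)) (Icc α π) :=
    (continuous_const.sub continuous_cos).continuousOn.div
      (continuous_const.sub continuous_cos).continuousOn fun η hη => by linarith [hcos η hη]
  have himage : (fun η => (cos α - cos η) / (1 - cos η)) '' Ioo α π
      = Ioo 0 (cos (α / 2) ^ 2) := by
    rw [hcont.image_Ioo_of_strictMonoOn h1.le hmono, cos_half_sq, cos_pi]
    congr 1 <;> field_simp <;> ring
  rw [← himage, integral_image_eq_integral_abs_deriv_smul measurableSet_Ioo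
    (fun η hη => (hasDerivAt_cos_ratio (hcos η (Ioo_subset_Icc_self hη)).ne).hasDerivWithinAt)
    (hmono.injOn.mono Ioo_subset_Icc_self)]
  refine setIntegral_congr_fun measurableSet_Ioo fun η hη => ?_
  have := hcos η (Ioo_subset_Icc_self hη)
  have := hcos α (left_mem_Icc.2 h1.le)
  have := sin_pos_of_pos_of_lt_pi (h0.trans hη.1) hη.2
  rw [smul_eq_mul, abs_of_pos (by apply div_pos <;> nlinarith)]

end CosRatio

lemma point_charge_integrand_eq {a α η : ℝ} (F : ℝ) (h0 : 0 < α) (hαη : α < η)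
    (hη : η < π) :
    (1 - cos η) ^ (-a) * ((1 - cos α) / (1 - cos η)) ^ (a + 1 / 2)
        * ((1 - cos α) / (cos α - cos η)) ^ ((1 : ℝ) / 2) * F * sin η ^ (2 * a)
      = (1 - cos α) * sin η / (1 - cos η) ^ 2
        * ((1 - cos α) ^ ((1 : ℝ) / 2) * 2 ^ (a - 1 / 2)
          * (((cos α - cos η) / (1 - cos η)) ^ ((1 : ℝ) / 2 - 1)
            * (cos (α / 2) ^ 2 - (cos α - cos η) / (1 - cos η)) ^ (a + 1 / 2 - 1) * F)) := by
  have hsin : 0 < sin η := sin_pos_of_pos_of_lt_pi (h0.trans hαη) hη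
  have hB : 0 < cos α - cos η :=
    sub_pos.2 (cos_lt_cos_of_nonneg_of_le_pi h0.le hη.le hαη)
  have hC : 0 < 1 + cos η := by linarith [(cos_mem_Ioo (h0.trans hαη) hη).1]
  have hD : 0 < 1 - cos α := by linarith [(cos_mem_Ioo h0 (hαη.trans hη)).2]
  have hA : 0 < 1 - cos η := by linarith
  have hsin_sq : sin η ^ 2 = (1 - cos η) * (1 + cos η) := by rw [sin_sq]; ring
  have hsin_eq : sin η = ((1 - cos η) * (1 + cos η)) ^ ((1 : ℝ) / 2) := by
    rw [← hsin_sq, ← Real.sqrt_eq_rpow, Real.sqrt_sq hsin.le]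
  have hsin_pow : sin η ^ (2 * a) = ((1 - cos η) * (1 + cos η)) ^ a := by
    rw [Real.rpow_mul hsin.le, Real.rpow_two, hsin_sq]
  have hgap : cos (α / 2) ^ 2 - (cos α - cos η) / (1 - cos η)
      = (1 - cos α) * (1 + cos η) / (2 * (1 - cos η)) := by
    rw [cos_half_sq]
    field_simp
    ring
  rw [hsin_pow, hgap, hsin_eq]
  generalize 1 - cos η = A at *
  generalize cos α - cos η = B at *
  generalize 1 + cos η = C at *
  generalize 1 - cos α = D at *
  -- all the factors are powers of the positive reals `A, B, C, D, 2`: compare logarithms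
  have key : A ^ (-a) * (D / A) ^ (a + 1 / 2) * (D / B) ^ ((1 : ℝ) / 2) * (A * C) ^ a
      = D * (A * C) ^ ((1 : ℝ) / 2) / A ^ 2 * (D ^ ((1 : ℝ) / 2) * 2 ^ (a - 1 / 2)
        * ((B / A) ^ ((1 : ℝ) / 2 - 1) * (D * C / (2 * A)) ^ (a + 1 / 2 - 1))) := by
    refine Real.log_injOn_pos (mem_Ioi.2 (by positivity)) (mem_Ioi.2 (by positivity)) ?_
    repeat
      first
      | rw [Real.log_mul (by positivity) (by positivity)]
      | rw [Real.log_div (by positivity) (by positivity)]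
      | rw [Real.log_rpow (by positivity)]
      | rw [Real.log_pow]
    ring
  linear_combination F * key

theorem integral_point_charge {a α : ℝ} (ha : 0 < a) (h0 : 0 < α) (h1 : α < π) :
    (∫ η in α..π, (1 - cos η) ^ (-a) * ((1 - cos α) / (1 - cos η)) ^ (a + 1 / 2)
        * ((1 - cos α) / (cos α - cos η)) ^ ((1 : ℝ) / 2)
        * hyp2F1 1 (a + 1 / 2) (1 / 2) ((cos α - cos η) / (1 - cos η)) * sin η ^ (2 * a))
      = √π * 2 ^ a * Gamma (a + 1 / 2) / Gamma a * incBeta (cos (α / 2) ^ 2) a (1 / 2) := by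
  have hcos := cos_mem_Ioo h0 h1
  set m := cos (α / 2) ^ 2
  have hm : m = (1 + cos α) / 2 := cos_half_sq α
  have hm0 : 0 < m := by linarith [hcos.1]
  have hm1 : m < 1 := by linarith [hcos.2]
  have hsub := integral_Ioo_comp_cos_ratio h0 h1 fun x => (1 - cos α) ^ ((1 : ℝ) / 2)
    * 2 ^ (a - 1 / 2) * (x ^ ((1 : ℝ) / 2 - 1) * (m - x) ^ (a + 1 / 2 - 1)
      * hyp2F1 1 (a + 1 / 2) (1 / 2) x)
  rw [intervalIntegral.integral_of_le h1.le, integral_Ioc_eq_integral_Ioo,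
    setIntegral_congr_fun measurableSet_Ioo fun η hη =>
      point_charge_integrand_eq _ h0 hη.1 hη.2, hsub, integral_const_mul,
    integral_Ioo_rpow_mul_sub_rpow_mul_hyp2F1 (by positivity) (by norm_num) (by positivity)
      (by linarith) hm0 hm1,
    incBeta_eq_mul_hyp2F1 ha (by positivity) (by norm_num) hm0.le hm1]
  have htwo : (2 : ℝ) ^ ((1 : ℝ) / 2) * 2 ^ (a - 1 / 2) = 2 ^ a := by
    rw [← rpow_add two_pos]
    ring_nf
  rw [show (1 : ℝ) / 2 + (a + 1 / 2) = a + 1 by ring, add_sub_cancel_right, Gamma_one_half_eq,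
    Gamma_add_one ha.ne', show 1 - cos α = 2 * (1 - m) by linarith,
    mul_rpow zero_le_two (by linarith), ← htwo]
  have := (Gamma_pos_of_pos ha).ne'
  field_simp

/-- For an integer `d ≥ 3` and `0 < α < π`,
`∫_α^π (1−cos η)^{−(d−2)/2} ((1−cos α)/(1−cos η))^{(d−1)/2}
   ((1−cos α)/(cos α − cos η))^{1/2} ₂F₁(1,(d−1)/2;1/2;(cos α − cos η)/(1−cos η))
   sin^{d−2} η dη
  = (√π 2^{(d−2)/2} Γ((d−1)/2)/Γ((d−2)/2)) B(cos²(α/2); (d−2)/2, 1/2)`. -/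
theorem point_charge_field_integral (d : ℕ) (hd : 3 ≤ d) (α : ℝ)
    (h0 : 0 < α) (h1 : α < π) :
    (∫ η in α..π,
        (1 - Real.cos η) ^ (-(((d:ℝ) - 2)/2))
        * ((1 - Real.cos α)/(1 - Real.cos η)) ^ (((d:ℝ) - 1)/2)
        * ((1 - Real.cos α)/(Real.cos α - Real.cos η)) ^ ((1:ℝ)/2)
        * hyp2F1 1 (((d:ℝ) - 1)/2) (1/2) ((Real.cos α - Real.cos η)/(1 - Real.cos η))
        * Real.sin η ^ ((d:ℝ) - 2))
      = Real.sqrt π * 2 ^ (((d:ℝ) - 2)/2) * Real.Gamma (((d:ℝ) - 1)/2)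
          / Real.Gamma (((d:ℝ) - 2)/2)
        * incBeta (Real.cos (α/2) ^ 2) (((d:ℝ) - 2)/2) (1/2) := by
  obtain ⟨a, ha_def⟩ : ∃ a, a = ((d : ℝ) - 2) / 2 := ⟨_, rfl⟩
  have ha : 0 < a := by
    have : (3 : ℝ) ≤ d := by exact_mod_cast hd
    linarith
  rw [show ((d : ℝ) - 1) / 2 = a + 1 / 2 by linarith, show (d : ℝ) - 2 = 2 * a by linarith,
    mul_div_cancel_left₀ a two_ne_zero]
  exact integral_point_charge ha h0 h1
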